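/- The 2-form ω_f is closed on {y > 0}: for all (x,y,u,v) ∈ ℝ⁴ with y > 0 and all indices 1 ≤ i < j < k ≤ 4 (with ∂₁ = ∂/∂x, ∂₂ = ∂/∂y, ∂₃ = ∂/∂u, ∂₄ = ∂/∂v), one has ∂_i (Ω_f)_{jk} − ∂_j (Ω_f)_{ik} + ∂_k (Ω_f)_{ij} = 0. -/

import Mathlib

open Matrix

/-- The coefficient matrix `Ω_f(x,y,u,v)` of the 2-form `ω_f` on
`ℍ²×ℂ ≅ {(x,y,u,v) : y > 0}`, where `f, f′` are evaluated at `t = y³(u²+v²)`. -/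
noncomputable def Omf (f : ℝ → ℝ) (x y u v : ℝ) : Matrix (Fin 4) (Fin 4) ℝ :=
  let F := f (y ^ 3 * (u ^ 2 + v ^ 2))
  let F' := deriv f (y ^ 3 * (u ^ 2 + v ^ 2))
  !![0, (-1 + F - 3 * F' * y ^ 3 * (u ^ 2 + v ^ 2)) / y ^ 2, -2 * y ^ 2 * F' * u,
       -2 * y ^ 2 * F' * v;
     -((-1 + F - 3 * F' * y ^ 3 * (u ^ 2 + v ^ 2)) / y ^ 2), 0, 2 * y ^ 2 * F' * v,
       -2 * y ^ 2 * F' * u;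
     -(-2 * y ^ 2 * F' * u), -(2 * y ^ 2 * F' * v), 0, -(4 / 3) * F' * y ^ 3;
     -(-2 * y ^ 2 * F' * v), -(-2 * y ^ 2 * F' * u), -(-(4 / 3) * F' * y ^ 3), 0]


/-- The partial derivative `∂_k g` of a function `g` of `(x,y,u,v)`, with
`∂₁ = ∂/∂x`, `∂₂ = ∂/∂y`, `∂₃ = ∂/∂u`, `∂₄ = ∂/∂v`. -/
noncomputable def pd (k : Fin 4) (g : ℝ → ℝ → ℝ → ℝ → ℝ) (x y u v : ℝ) : ℝ :=
  ![deriv (fun s => g s y u v) x,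
    deriv (fun s => g x s u v) y,
    deriv (fun s => g x y s v) u,
    deriv (fun s => g x y u s) v] k

section Aux

variable (f : ℝ → ℝ)

lemma aux012 (hf : ContDiff ℝ (⊤ : ℕ∞) f) (x y u v : ℝ) (hy : 0 < y) :
    pd 0 (fun x y u v => Omf f x y u v 1 2) x y u v -
      pd 1 (fun x y u v => Omf f x y u v 0 2) x y u v +
      pd 2 (fun x y u v => Omf f x y u v 0 1) x y u v = 0 := by
  have hf1 : Differentiable ℝ f := hf.differentiable (by simp)
  have hfi : ContDiff ℝ ((⊤ : ℕ∞) : WithTop ℕ∞) f := hf.of_le (by simp)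
  have hf2 : Differentiable ℝ (deriv f) :=
    (contDiff_infty_iff_deriv.mp hfi).2.differentiable (by simp)
  simp only [pd, Omf, Matrix.cons_val_zero, Matrix.cons_val_one, Matrix.head_cons,
    Matrix.cons_val_two, Matrix.tail_cons, Matrix.cons_val_three, Matrix.cons_val',
    Matrix.head_fin_const, Matrix.empty_val', Matrix.cons_val_fin_one, Matrix.of_apply,
    deriv_const']
  set t0 := y ^ 3 * (u ^ 2 + v ^ 2) with ht0
  have hty : HasDerivAt (fun s : ℝ => s ^ 3 * (u ^ 2 + v ^ 2)) (3 * y ^ 2 * (u ^ 2 + v ^ 2)) y := by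
    simpa [mul_comm] using (hasDerivAt_pow 3 y).mul_const (u ^ 2 + v ^ 2)
  have hFy : HasDerivAt (fun s : ℝ => deriv f (s ^ 3 * (u ^ 2 + v ^ 2)))
      (deriv (deriv f) t0 * (3 * y ^ 2 * (u ^ 2 + v ^ 2))) y :=
    ((hf2 t0).hasDerivAt).comp (h₂ := deriv f) y hty
  have hs2 : HasDerivAt (fun s : ℝ => -2 * s ^ 2) (-2 * (2 * y)) y := by
    simpa using (hasDerivAt_pow 2 y).const_mul (-2 : ℝ)
  have h1 : HasDerivAt (fun s : ℝ => -2 * s ^ 2 * deriv f (s ^ 3 * (u ^ 2 + v ^ 2)) * u)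
      ((-2 * (2 * y) * deriv f t0 +
        -2 * y ^ 2 * (deriv (deriv f) t0 * (3 * y ^ 2 * (u ^ 2 + v ^ 2)))) * u) y :=
    (hs2.mul hFy).mul_const u
  have htu : HasDerivAt (fun s : ℝ => y ^ 3 * (s ^ 2 + v ^ 2)) (y ^ 3 * (2 * u)) u := by
    simpa using ((hasDerivAt_pow 2 u).add_const (v ^ 2)).const_mul (y ^ 3)
  have hfu : HasDerivAt (fun s : ℝ => f (y ^ 3 * (s ^ 2 + v ^ 2)))
      (deriv f t0 * (y ^ 3 * (2 * u))) u :=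
    ((hf1 t0).hasDerivAt).comp u htu
  have hFu : HasDerivAt (fun s : ℝ => deriv f (y ^ 3 * (s ^ 2 + v ^ 2)))
      (deriv (deriv f) t0 * (y ^ 3 * (2 * u))) u :=
    ((hf2 t0).hasDerivAt).comp (h₂ := deriv f) u htu
  have hru : HasDerivAt (fun s : ℝ => s ^ 2 + v ^ 2) (2 * u) u := by
    simpa using (hasDerivAt_pow 2 u).add_const (v ^ 2)
  have h2 : HasDerivAt
      (fun s : ℝ => (-1 + f (y ^ 3 * (s ^ 2 + v ^ 2)) -
          3 * deriv f (y ^ 3 * (s ^ 2 + v ^ 2)) * y ^ 3 * (s ^ 2 + v ^ 2)) / y ^ 2)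
      ((deriv f t0 * (y ^ 3 * (2 * u)) -
        (3 * (deriv (deriv f) t0 * (y ^ 3 * (2 * u))) * y ^ 3 * (u ^ 2 + v ^ 2) +
          3 * deriv f t0 * y ^ 3 * (2 * u))) / y ^ 2) u :=
    ((hfu.const_add (-1)).sub (((hFu.const_mul 3).mul_const (y ^ 3)).mul hru)).div_const (y ^ 2)
  rw [h1.deriv, h2.deriv]
  have hy' : y ≠ 0 := ne_of_gt hy
  field_simp
  ring

lemma aux013 (hf : ContDiff ℝ (⊤ : ℕ∞) f) (x y u v : ℝ) (hy : 0 < y) :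
    pd 0 (fun x y u v => Omf f x y u v 1 3) x y u v -
      pd 1 (fun x y u v => Omf f x y u v 0 3) x y u v +
      pd 3 (fun x y u v => Omf f x y u v 0 1) x y u v = 0 := by
  have hf1 : Differentiable ℝ f := hf.differentiable (by simp)
  have hfi : ContDiff ℝ ((⊤ : ℕ∞) : WithTop ℕ∞) f := hf.of_le (by simp)
  have hf2 : Differentiable ℝ (deriv f) :=
    (contDiff_infty_iff_deriv.mp hfi).2.differentiable (by simp)
  simp only [pd, Omf, Matrix.cons_val_zero, Matrix.cons_val_one, Matrix.head_cons,
    Matrix.cons_val_two, Matrix.tail_cons, Matrix.cons_val_three, Matrix.cons_val',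
    Matrix.head_fin_const, Matrix.empty_val', Matrix.cons_val_fin_one, Matrix.of_apply,
    deriv_const']
  set t0 := y ^ 3 * (u ^ 2 + v ^ 2) with ht0
  have hty : HasDerivAt (fun s : ℝ => s ^ 3 * (u ^ 2 + v ^ 2)) (3 * y ^ 2 * (u ^ 2 + v ^ 2)) y := by
    simpa [mul_comm] using (hasDerivAt_pow 3 y).mul_const (u ^ 2 + v ^ 2)
  have hFy : HasDerivAt (fun s : ℝ => deriv f (s ^ 3 * (u ^ 2 + v ^ 2)))
      (deriv (deriv f) t0 * (3 * y ^ 2 * (u ^ 2 + v ^ 2))) y :=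
    ((hf2 t0).hasDerivAt).comp (h₂ := deriv f) y hty
  have hs2 : HasDerivAt (fun s : ℝ => -2 * s ^ 2) (-2 * (2 * y)) y := by
    simpa using (hasDerivAt_pow 2 y).const_mul (-2 : ℝ)
  have h1 : HasDerivAt (fun s : ℝ => -2 * s ^ 2 * deriv f (s ^ 3 * (u ^ 2 + v ^ 2)) * v)
      ((-2 * (2 * y) * deriv f t0 +
        -2 * y ^ 2 * (deriv (deriv f) t0 * (3 * y ^ 2 * (u ^ 2 + v ^ 2)))) * v) y :=
    (hs2.mul hFy).mul_const v
  have htv : HasDerivAt (fun s : ℝ => y ^ 3 * (u ^ 2 + s ^ 2)) (y ^ 3 * (2 * v)) v := by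
    simpa using ((hasDerivAt_pow 2 v).const_add (u ^ 2)).const_mul (y ^ 3)
  have hfv : HasDerivAt (fun s : ℝ => f (y ^ 3 * (u ^ 2 + s ^ 2)))
      (deriv f t0 * (y ^ 3 * (2 * v))) v :=
    ((hf1 t0).hasDerivAt).comp v htv
  have hFv : HasDerivAt (fun s : ℝ => deriv f (y ^ 3 * (u ^ 2 + s ^ 2)))
      (deriv (deriv f) t0 * (y ^ 3 * (2 * v))) v :=
    ((hf2 t0).hasDerivAt).comp (h₂ := deriv f) v htv
  have hrv : HasDerivAt (fun s : ℝ => u ^ 2 + s ^ 2) (2 * v) v := by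
    simpa using (hasDerivAt_pow 2 v).const_add (u ^ 2)
  have h2 : HasDerivAt
      (fun s : ℝ => (-1 + f (y ^ 3 * (u ^ 2 + s ^ 2)) -
          3 * deriv f (y ^ 3 * (u ^ 2 + s ^ 2)) * y ^ 3 * (u ^ 2 + s ^ 2)) / y ^ 2)
      ((deriv f t0 * (y ^ 3 * (2 * v)) -
        (3 * (deriv (deriv f) t0 * (y ^ 3 * (2 * v))) * y ^ 3 * (u ^ 2 + v ^ 2) +
          3 * deriv f t0 * y ^ 3 * (2 * v))) / y ^ 2) v :=
    ((hfv.const_add (-1)).sub (((hFv.const_mul 3).mul_const (y ^ 3)).mul hrv)).div_const (y ^ 2)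
  rw [h1.deriv, h2.deriv]
  have hy' : y ≠ 0 := ne_of_gt hy
  field_simp
  ring

lemma aux023 (hf : ContDiff ℝ (⊤ : ℕ∞) f) (x y u v : ℝ) (hy : 0 < y) :
    pd 0 (fun x y u v => Omf f x y u v 2 3) x y u v -
      pd 2 (fun x y u v => Omf f x y u v 0 3) x y u v +
      pd 3 (fun x y u v => Omf f x y u v 0 2) x y u v = 0 := by
  have hfi : ContDiff ℝ ((⊤ : ℕ∞) : WithTop ℕ∞) f := hf.of_le (by simp)
  have hf2 : Differentiable ℝ (deriv f) :=
    (contDiff_infty_iff_deriv.mp hfi).2.differentiable (by simp)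
  simp only [pd, Omf, Matrix.cons_val_zero, Matrix.cons_val_one, Matrix.head_cons,
    Matrix.cons_val_two, Matrix.tail_cons, Matrix.cons_val_three, Matrix.cons_val',
    Matrix.head_fin_const, Matrix.empty_val', Matrix.cons_val_fin_one, Matrix.of_apply,
    deriv_const']
  set t0 := y ^ 3 * (u ^ 2 + v ^ 2) with ht0
  have htu : HasDerivAt (fun s : ℝ => y ^ 3 * (s ^ 2 + v ^ 2)) (y ^ 3 * (2 * u)) u := by
    simpa using ((hasDerivAt_pow 2 u).add_const (v ^ 2)).const_mul (y ^ 3)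
  have hFu : HasDerivAt (fun s : ℝ => deriv f (y ^ 3 * (s ^ 2 + v ^ 2)))
      (deriv (deriv f) t0 * (y ^ 3 * (2 * u))) u :=
    ((hf2 t0).hasDerivAt).comp (h₂ := deriv f) u htu
  have htv : HasDerivAt (fun s : ℝ => y ^ 3 * (u ^ 2 + s ^ 2)) (y ^ 3 * (2 * v)) v := by
    simpa using ((hasDerivAt_pow 2 v).const_add (u ^ 2)).const_mul (y ^ 3)
  have hFv : HasDerivAt (fun s : ℝ => deriv f (y ^ 3 * (u ^ 2 + s ^ 2)))
      (deriv (deriv f) t0 * (y ^ 3 * (2 * v))) v :=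
    ((hf2 t0).hasDerivAt).comp (h₂ := deriv f) v htv
  have h1 : HasDerivAt (fun s : ℝ => -2 * y ^ 2 * deriv f (y ^ 3 * (s ^ 2 + v ^ 2)) * v)
      (-2 * y ^ 2 * (deriv (deriv f) t0 * (y ^ 3 * (2 * u))) * v) u :=
    (hFu.const_mul (-2 * y ^ 2)).mul_const v
  have h2 : HasDerivAt (fun s : ℝ => -2 * y ^ 2 * deriv f (y ^ 3 * (u ^ 2 + s ^ 2)) * u)
      (-2 * y ^ 2 * (deriv (deriv f) t0 * (y ^ 3 * (2 * v))) * u) v :=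
    (hFv.const_mul (-2 * y ^ 2)).mul_const u
  rw [h1.deriv, h2.deriv]
  ring

lemma aux123 (hf : ContDiff ℝ (⊤ : ℕ∞) f) (x y u v : ℝ) (hy : 0 < y) :
    pd 1 (fun x y u v => Omf f x y u v 2 3) x y u v -
      pd 2 (fun x y u v => Omf f x y u v 1 3) x y u v +
      pd 3 (fun x y u v => Omf f x y u v 1 2) x y u v = 0 := by
  have hfi : ContDiff ℝ ((⊤ : ℕ∞) : WithTop ℕ∞) f := hf.of_le (by simp)
  have hf2 : Differentiable ℝ (deriv f) :=
    (contDiff_infty_iff_deriv.mp hfi).2.differentiable (by simp)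
  simp only [pd, Omf, Matrix.cons_val_zero, Matrix.cons_val_one, Matrix.head_cons,
    Matrix.cons_val_two, Matrix.tail_cons, Matrix.cons_val_three, Matrix.cons_val',
    Matrix.head_fin_const, Matrix.empty_val', Matrix.cons_val_fin_one, Matrix.of_apply,
    deriv_const']
  set t0 := y ^ 3 * (u ^ 2 + v ^ 2) with ht0
  have hty : HasDerivAt (fun s : ℝ => s ^ 3 * (u ^ 2 + v ^ 2)) (3 * y ^ 2 * (u ^ 2 + v ^ 2)) y := by
    simpa [mul_comm] using (hasDerivAt_pow 3 y).mul_const (u ^ 2 + v ^ 2)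
  have hFy : HasDerivAt (fun s : ℝ => deriv f (s ^ 3 * (u ^ 2 + v ^ 2)))
      (deriv (deriv f) t0 * (3 * y ^ 2 * (u ^ 2 + v ^ 2))) y :=
    ((hf2 t0).hasDerivAt).comp (h₂ := deriv f) y hty
  have hp3 : HasDerivAt (fun s : ℝ => s ^ 3) (3 * y ^ 2) y := by
    simpa using hasDerivAt_pow 3 y
  have h1 : HasDerivAt (fun s : ℝ => -(4 / 3) * deriv f (s ^ 3 * (u ^ 2 + v ^ 2)) * s ^ 3)
      (-(4 / 3) * (deriv (deriv f) t0 * (3 * y ^ 2 * (u ^ 2 + v ^ 2))) * y ^ 3 +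
        -(4 / 3) * deriv f t0 * (3 * y ^ 2)) y :=
    (hFy.const_mul (-(4 / 3))).mul hp3
  have htu : HasDerivAt (fun s : ℝ => y ^ 3 * (s ^ 2 + v ^ 2)) (y ^ 3 * (2 * u)) u := by
    simpa using ((hasDerivAt_pow 2 u).add_const (v ^ 2)).const_mul (y ^ 3)
  have hFu : HasDerivAt (fun s : ℝ => deriv f (y ^ 3 * (s ^ 2 + v ^ 2)))
      (deriv (deriv f) t0 * (y ^ 3 * (2 * u))) u :=
    ((hf2 t0).hasDerivAt).comp (h₂ := deriv f) u htu
  have h2 : HasDerivAt (fun s : ℝ => -2 * y ^ 2 * deriv f (y ^ 3 * (s ^ 2 + v ^ 2)) * s)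
      (-2 * y ^ 2 * (deriv (deriv f) t0 * (y ^ 3 * (2 * u))) * u +
        -2 * y ^ 2 * deriv f t0 * 1) u :=
    (hFu.const_mul (-2 * y ^ 2)).mul (hasDerivAt_id u)
  have htv : HasDerivAt (fun s : ℝ => y ^ 3 * (u ^ 2 + s ^ 2)) (y ^ 3 * (2 * v)) v := by
    simpa using ((hasDerivAt_pow 2 v).const_add (u ^ 2)).const_mul (y ^ 3)
  have hFv : HasDerivAt (fun s : ℝ => deriv f (y ^ 3 * (u ^ 2 + s ^ 2)))
      (deriv (deriv f) t0 * (y ^ 3 * (2 * v))) v :=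
    ((hf2 t0).hasDerivAt).comp (h₂ := deriv f) v htv
  have h3 : HasDerivAt (fun s : ℝ => 2 * y ^ 2 * deriv f (y ^ 3 * (u ^ 2 + s ^ 2)) * s)
      (2 * y ^ 2 * (deriv (deriv f) t0 * (y ^ 3 * (2 * v))) * v +
        2 * y ^ 2 * deriv f t0 * 1) v :=
    (hFv.const_mul (2 * y ^ 2)).mul (hasDerivAt_id v)
  rw [h1.deriv, h2.deriv, h3.deriv]
  ring

end Aux

/-- The 2-form `ω_f` is closed on `{y > 0}`. -/
theorem stmt4 (f : ℝ → ℝ) (hf : ContDiff ℝ (⊤ : ℕ∞) f) :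
    ∀ x y u v : ℝ, 0 < y → ∀ i j k : Fin 4, i < j → j < k →
      pd i (fun x y u v => Omf f x y u v j k) x y u v -
        pd j (fun x y u v => Omf f x y u v i k) x y u v +
        pd k (fun x y u v => Omf f x y u v i j) x y u v = 0 := by
  intro x y u v hy i j k hij hjk
  fin_cases i <;> fin_cases j <;> fin_cases k <;>
    first
    | exact absurd hij (by decide)
    | exact absurd hjk (by decide)
    | exact aux012 f hf x y u v hy
    | exact aux013 f hf x y u v hy
    | exact aux023 f hf x y u v hy
    | exact aux123 f hf x y u v hy
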